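/- Let Ω be a finite nonempty index set, f : Ω → ℝ, D_S = sqrt((1/|S|)·Σ_{x∈S} f(x)²). Let ω ⊂ Ω be nonempty with ω ≠ Ω and |f(x)| ≤ D_Ω for all x ∈ ω. Partition ω into nonempty disjoint subsets ω₁,…,ω_K (K ≥ 1) with union ω, and set Ω₀ = Ω∖ω and Ω_k = Ω∖ω_k. Then for any λ₁,…,λ_K > 0, Σ_{k=1}^K λ_k·D_{Ω_k} ≤ (Σ_{k=1}^K λ_k)·D_{Ω₀}. -/
import Mathlib


open Finset Real

lemma mean_sdiff_le {α : Type*} [DecidableEq α] (f : α → ℝ) (S T : Finset α)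
    (hT : T ⊆ S) (hne : (S \ T).Nonempty) (c : ℝ)
    (hc : ∀ x ∈ T, f x ^ 2 ≤ c)
    (hcm : c ≤ (1 / (S.card : ℝ)) * ∑ x ∈ S, f x ^ 2) :
    (1 / (S.card : ℝ)) * ∑ x ∈ S, f x ^ 2 ≤
      (1 / ((S \ T).card : ℝ)) * ∑ x ∈ S \ T, f x ^ 2 := by
  have hcard : (S \ T).card + T.card = S.card := by
    rw [Finset.card_sdiff_of_subset hT]
    exact Nat.sub_add_cancel (Finset.card_le_card hT)
  set A := ∑ x ∈ S \ T, f x ^ 2 with hA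
  set B := ∑ x ∈ T, f x ^ 2 with hB
  have hsum : A + B = ∑ x ∈ S, f x ^ 2 := Finset.sum_sdiff hT
  set m := ((S \ T).card : ℝ) with hm
  set t := ((T.card : ℝ)) with ht
  have hmt : m + t = (S.card : ℝ) := by rw [hm, ht, ← hcard]; push_cast; ring
  have hm0 : 0 < m := by
    rw [hm]; exact_mod_cast Finset.card_pos.mpr hne
  have ht0 : 0 ≤ t := by rw [ht]; positivity
  have hB0 : (0:ℝ) ≤ B := Finset.sum_nonneg (fun x _ => sq_nonneg _)
  have hn0 : (0:ℝ) < (S.card : ℝ) := by rw [← hmt]; linarith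
  have hBle : B ≤ c * t := by
    rw [hB, ht]
    calc ∑ x ∈ T, f x ^ 2 ≤ ∑ _x ∈ T, c := Finset.sum_le_sum hc
    _ = (T.card : ℝ) * c := by rw [Finset.sum_const, nsmul_eq_mul]
    _ = c * (T.card : ℝ) := mul_comm _ _
  have hcm' : c * (m + t) ≤ A + B := by
    rw [hmt, hsum, ← le_div_iff₀ hn0]
    calc c ≤ 1 / (S.card : ℝ) * ∑ x ∈ S, f x ^ 2 := hcm
    _ = (∑ x ∈ S, f x ^ 2) / (S.card : ℝ) := one_div_mul_eq_div _ _
  rw [← hsum, ← hmt, one_div_mul_eq_div, one_div_mul_eq_div,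
    div_le_div_iff₀ (by linarith) hm0]
  nlinarith [mul_le_mul_of_nonneg_left hcm' ht0,
    mul_nonneg (sub_nonneg.2 hBle) hm0.le,
    mul_nonneg (sub_nonneg.2 hBle) ht0]

/-- Partition the easily-predictable set `ω` into `ω 1, …, ω K`; then convex
combinations of RMSEs over `Ω \ ω k` are bounded by the RMSE over `Ω \ ω`. -/
theorem stmt5 {α : Type*} [DecidableEq α] (Ω ω : Finset α) (f : α → ℝ)
    (D : Finset α → ℝ)
    (hD : ∀ S : Finset α, D S = Real.sqrt ((1 / (S.card : ℝ)) * ∑ x ∈ S, f x ^ 2))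
    (hΩ : Ω.Nonempty) (hω : ω.Nonempty) (hsub : ω ⊆ Ω) (hne : ω ≠ Ω)
    (hbound : ∀ x ∈ ω, |f x| ≤ D Ω)
    (K : ℕ) (hK : 1 ≤ K) (w : Fin K → Finset α)
    (hwne : ∀ k, (w k).Nonempty)
    (hdisj : ∀ k l, k ≠ l → Disjoint (w k) (w l))
    (hunion : Finset.univ.biUnion w = ω)
    (lam : Fin K → ℝ) (hlam : ∀ k, 0 < lam k) :
    ∑ k, lam k * D (Ω \ w k) ≤ (∑ k, lam k) * D (Ω \ ω) := by
  set M := (1 / (Ω.card : ℝ)) * ∑ x ∈ Ω, f x ^ 2 with hM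
  have hM0 : 0 ≤ M := by
    apply mul_nonneg (by positivity)
    exact Finset.sum_nonneg (fun x _ => sq_nonneg _)
  have hfM : ∀ x ∈ ω, f x ^ 2 ≤ M := by
    intro x hx
    have h := hbound x hx
    rw [hD] at h
    have h2 : |f x| ^ 2 ≤ Real.sqrt M ^ 2 :=
      pow_le_pow_left₀ (abs_nonneg _) h 2
    rwa [sq_abs, Real.sq_sqrt hM0] at h2
  have hΩω : (Ω \ ω).Nonempty :=
    Finset.sdiff_nonempty.mpr (fun h => hne (Finset.Subset.antisymm hsub h))
  have hmono : ∀ k : Fin K, D (Ω \ w k) ≤ D (Ω \ ω) := by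
    intro k
    have hwk : w k ⊆ ω := hunion ▸ Finset.subset_biUnion_of_mem w (Finset.mem_univ k)
    have hsub2 : Ω \ ω ⊆ Ω \ w k := Finset.sdiff_subset_sdiff (le_refl Ω) hwk
    have hne2 : (Ω \ w k).Nonempty := hΩω.mono hsub2
    have step1 : M ≤ (1 / ((Ω \ w k).card : ℝ)) * ∑ x ∈ Ω \ w k, f x ^ 2 :=
      mean_sdiff_le f Ω (w k) (hwk.trans hsub) hne2 M
        (fun x hx => hfM x (hwk hx)) (le_refl M)
    have heq : (Ω \ w k) \ (ω \ w k) = Ω \ ω := by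
      ext x
      simp only [Finset.mem_sdiff, not_and, not_not]
      constructor
      · rintro ⟨⟨hxΩ, hxw⟩, h⟩
        exact ⟨hxΩ, fun hxω => hxw (h hxω)⟩
      · rintro ⟨hxΩ, hxω⟩
        exact ⟨⟨hxΩ, fun hxw => hxω (hwk hxw)⟩, fun hx => absurd hx hxω⟩
    have step2 : (1 / ((Ω \ w k).card : ℝ)) * ∑ x ∈ Ω \ w k, f x ^ 2 ≤
        (1 / ((Ω \ ω).card : ℝ)) * ∑ x ∈ Ω \ ω, f x ^ 2 := by
      have := mean_sdiff_le f (Ω \ w k) (ω \ w k)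
        (Finset.sdiff_subset_sdiff hsub (le_refl (w k)))
        (heq ▸ hΩω) M (fun x hx => hfM x (Finset.mem_sdiff.mp hx).1)
        (le_trans (le_refl M) step1)
      rwa [heq] at this
    rw [hD, hD]
    exact Real.sqrt_le_sqrt (le_trans step2 (le_refl _))
  calc ∑ k, lam k * D (Ω \ w k) ≤ ∑ k, lam k * D (Ω \ ω) :=
        Finset.sum_le_sum (fun k _ =>
          mul_le_mul_of_nonneg_left (hmono k) (hlam k).le)
  _ = (∑ k, lam k) * D (Ω \ ω) := (Finset.sum_mul _ _ _).symm
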